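/- arXiv:2605.17274 — 12 statements merged into one kernel-verified Lean document; each statement's English description precedes it below -/
import Mathlib

section
/- For every cardinal (or natural number) κ ≥ 4, the lattice M_κ of length 2 and width κ admits no complementation operation ' such that the resulting lattice with complementation satisfies the quasi-identity (x' ∧ y = 0 and x ∧ y' = 0) implies x = y. -/
theorem stmt_2 {L : Type*} [Lattice L] [BoundedOrder L]
    (A : Set L) (hA : ∀ x : L, x = ⊥ ∨ x = ⊤ ∨ x ∈ A)
    (hbot : (⊥ : L) ∉ A) (htop : (⊤ : L) ∉ A)
    (hsup : ∀ a ∈ A, ∀ b ∈ A, a ≠ b → a ⊔ b = ⊤)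
    (hinf : ∀ a ∈ A, ∀ b ∈ A, a ≠ b → a ⊓ b = ⊥)
    (hcard : 4 ≤ Cardinal.mk A)
    (c : L → L) (hc1 : ∀ a : L, a ⊔ c a = ⊤) (hc2 : ∀ a : L, a ⊓ c a = ⊥) :
    ¬ (∀ x y : L, c x ⊓ y = ⊥ → x ⊓ c y = ⊥ → x = y) := by
  intro H
  have hAbot : ∀ a ∈ A, a ≠ ⊥ := fun a ha h => hbot (h ▸ ha)
  have hAtop : ∀ a ∈ A, a ≠ ⊤ := fun a ha h => htop (h ▸ ha)
  have hcA : ∀ a ∈ A, c a ∈ A := by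
    intro a ha
    rcases hA (c a) with h | h | h
    · exfalso
      apply hAtop a ha
      have := hc1 a
      rw [h, sup_bot_eq] at this
      exact this
    · exfalso
      apply hAbot a ha
      have := hc2 a
      rw [h, inf_top_eq] at this
      exact this
    · exact h
  have key : ∀ u ∈ A, ∀ v ∈ A, u ≠ v → c u ≠ v → c v ≠ u → False := by
    intro u hu v hv huv h1 h2
    exact huv (H u v (hinf _ (hcA u hu) _ hv h1)
      (hinf _ hu _ (hcA v hv) (fun h => h2 h.symm)))
  have h4 : Cardinal.mk (ULift.{u_1} (Fin 4)) ≤ Cardinal.mk A := by simpa using hcard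
  obtain ⟨f⟩ := Cardinal.le_def _ _ |>.mp h4
  set a : Fin 4 → L := fun i => (f ⟨i⟩ : L) with ha_def
  have haA : ∀ i, a i ∈ A := fun i => (f ⟨i⟩).2
  have hne : ∀ i j : Fin 4, i ≠ j → a i ≠ a j := by
    intro i j hij h
    exact hij (congrArg ULift.down (f.injective (Subtype.ext h)))
  have main : ∀ y1 ∈ A, ∀ y2 ∈ A, y1 ≠ y2 → y1 ≠ a 0 → y2 ≠ a 0 →
      c (a 0) ≠ y1 → c (a 0) ≠ y2 → False := by
    intro y1 hy1 y2 hy2 h12 h10 h20 hc1' hc2'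
    by_cases hx1 : c y1 = a 0
    · by_cases hx2 : c y2 = y1
      · exact key (a 0) (haA 0) y2 hy2 (Ne.symm h20) hc2' (fun h => h10 (hx2 ▸ h))
      · exact key y1 hy1 y2 hy2 h12 (fun h => h20 (hx1 ▸ h.symm)) hx2
    · exact key (a 0) (haA 0) y1 hy1 (Ne.symm h10) hc1' hx1
  by_cases e1 : c (a 0) = a 1
  · exact main (a 2) (haA 2) (a 3) (haA 3) (hne 2 3 (by decide)) (hne 2 0 (by decide))
      (hne 3 0 (by decide)) (e1 ▸ hne 1 2 (by decide)) (e1 ▸ hne 1 3 (by decide))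
  · by_cases e2 : c (a 0) = a 2
    · exact main (a 1) (haA 1) (a 3) (haA 3) (hne 1 3 (by decide)) (hne 1 0 (by decide))
        (hne 3 0 (by decide)) (e2 ▸ hne 2 1 (by decide)) (e2 ▸ hne 2 3 (by decide))
    · exact main (a 1) (haA 1) (a 2) (haA 2) (hne 1 2 (by decide)) (hne 1 0 (by decide))
        (hne 2 0 (by decide)) e1 e2
end

section
/- A lattice with complementation satisfies the quasi-identity (x ∧ y' = 0 implies x ≤ y) if and only if it is a Boolean algebra (i.e., its underlying lattice is distributive and ' is the Boolean complement). -/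
theorem stmt_3 {L : Type*} [Lattice L] [BoundedOrder L] (c : L → L)
    (hc1 : ∀ a : L, a ⊔ c a = ⊤) (hc2 : ∀ a : L, a ⊓ c a = ⊥) :
    (∀ x y : L, x ⊓ c y = ⊥ → x ≤ y) ↔
      ((∀ x y z : L, x ⊓ (y ⊔ z) = (x ⊓ y) ⊔ (x ⊓ z)) ∧
       (∀ a b : L, a ⊔ b = ⊤ → a ⊓ b = ⊥ → b = c a)) := by
  constructor
  · intro hq
    -- c is involutive
    have le1 : ∀ y : L, c (c y) ≤ y := fun y =>
      hq _ _ (by rw [inf_comm]; exact hc2 (c y))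
    have inv : ∀ y : L, c (c y) = y := by
      intro y
      refine le_antisymm (le1 y) (hq _ _ ?_)
      exact le_antisymm (le_trans (inf_le_inf_left y (le1 (c y))) (le_of_eq (hc2 y))) bot_le
    -- key lemma
    have bsup : ∀ t y z : L, t ⊓ y = ⊥ → t ⊓ z = ⊥ → t ⊓ (y ⊔ z) = ⊥ := by
      intro t y z h1 h2
      have hy : y ≤ c t := hq y (c t) (by rw [inv, inf_comm]; exact h1)
      have hz : z ≤ c t := hq z (c t) (by rw [inv, inf_comm]; exact h2)
      refine le_antisymm ?_ bot_le
      calc t ⊓ (y ⊔ z) ≤ t ⊓ c t := inf_le_inf_left t (sup_le hy hz)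
        _ = ⊥ := hc2 t
    constructor
    · intro x y z
      set w := (x ⊓ y) ⊔ (x ⊓ z) with hw
      refine le_antisymm ?_ (sup_le (inf_le_inf_left x le_sup_left) (inf_le_inf_left x le_sup_right))
      have h1 : x ⊓ c w ⊓ y = ⊥ := by
        refine le_antisymm ?_ bot_le
        calc x ⊓ c w ⊓ y ≤ w ⊓ c w := by
              refine le_inf ?_ (le_trans inf_le_left inf_le_right)
              exact le_trans (inf_le_inf_right y inf_le_left) le_sup_left
          _ = ⊥ := hc2 w
      have h2 : x ⊓ c w ⊓ z = ⊥ := by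
        refine le_antisymm ?_ bot_le
        calc x ⊓ c w ⊓ z ≤ w ⊓ c w := by
              refine le_inf ?_ (le_trans inf_le_left inf_le_right)
              exact le_trans (inf_le_inf_right z inf_le_left) le_sup_right
          _ = ⊥ := hc2 w
      have := bsup (x ⊓ c w) y z h1 h2
      refine hq _ _ ?_
      calc x ⊓ (y ⊔ z) ⊓ c w = x ⊓ c w ⊓ (y ⊔ z) := by ac_rfl
        _ = ⊥ := this
    · intro a b hab1 hab2
      refine le_antisymm (hq b (c a) (by rw [inv, inf_comm]; exact hab2)) ?_
      refine hq (c a) b ?_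
      have ha : c a ⊓ c b ⊓ a = ⊥ := by
        refine le_antisymm ?_ bot_le
        calc c a ⊓ c b ⊓ a ≤ a ⊓ c a := le_inf inf_le_right (le_trans inf_le_left inf_le_left)
          _ = ⊥ := hc2 a
      have hb : c a ⊓ c b ⊓ b = ⊥ := by
        refine le_antisymm ?_ bot_le
        calc c a ⊓ c b ⊓ b ≤ b ⊓ c b := le_inf inf_le_right (le_trans inf_le_left inf_le_right)
          _ = ⊥ := hc2 b
      have := bsup (c a ⊓ c b) a b ha hb
      rw [hab1, inf_top_eq] at this
      exact this
  · rintro ⟨hd, _⟩ x y hxy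
    calc x = x ⊓ (y ⊔ c y) := by rw [hc1, inf_top_eq]
      _ = (x ⊓ y) ⊔ (x ⊓ c y) := hd x y (c y)
      _ = x ⊓ y := by rw [hxy, sup_bot_eq]
      _ ≤ y := inf_le_right
end

section
/- Let L be a lattice with complementation. If L has no {0,1}-sublattice isomorphic to a pentagon, then L satisfies: for all x ≤ y with x' = y' one has x = y. Moreover, if L satisfies this latter quasi-identity, then L has no subalgebra whose lattice reduct is a pentagon. -/
theorem stmt_4 {L : Type*} [Lattice L] [BoundedOrder L] (c : L → L)
    (hc1 : ∀ a : L, a ⊔ c a = ⊤) (hc2 : ∀ a : L, a ⊓ c a = ⊥) :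
    ((¬ ∃ a b d : L, a ≠ ⊥ ∧ b ≠ ⊤ ∧ a < b ∧
        a ⊓ d = ⊥ ∧ b ⊓ d = ⊥ ∧ a ⊔ d = ⊤ ∧ b ⊔ d = ⊤) →
      (∀ x y : L, x ≤ y → c x = c y → x = y)) ∧
    ((∀ x y : L, x ≤ y → c x = c y → x = y) →
      ¬ ∃ a b d : L, a ≠ ⊥ ∧ b ≠ ⊤ ∧ a < b ∧
        a ⊓ d = ⊥ ∧ b ⊓ d = ⊥ ∧ a ⊔ d = ⊤ ∧ b ⊔ d = ⊤ ∧
        (∀ x ∈ ({⊥, a, b, d, ⊤} : Set L), c x ∈ ({⊥, a, b, d, ⊤} : Set L))) := by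
  constructor
  · intro hnp x y hxy hcxy
    by_contra hne
    have hlt : x < y := lt_of_le_of_ne hxy hne
    apply hnp
    refine ⟨x, y, c x, ?_, ?_, hlt, hc2 x, by rw [hcxy]; exact hc2 y, hc1 x,
      by rw [hcxy]; exact hc1 y⟩
    · intro hx
      subst hx
      have h1 : c (⊥ : L) = ⊤ := by have := hc1 (⊥ : L); rwa [bot_sup_eq] at this
      have h2 : y = ⊥ := by have := hc2 y; rwa [← hcxy, h1, inf_top_eq] at this
      rw [h2] at hlt; exact lt_irrefl _ hlt
    · intro hy
      subst hy
      have h1 : c (⊤ : L) = ⊥ := by have := hc2 (⊤ : L); rwa [top_inf_eq] at this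
      have h2 : x = ⊤ := by have := hc1 x; rwa [hcxy, h1, sup_bot_eq] at this
      rw [h2] at hlt; exact lt_irrefl _ hlt
  · rintro hq ⟨a, b, d, ha, hb, hab, had, hbd, had', hbd', hcl⟩
    have hane : a ≠ ⊤ := fun h => hb (top_le_iff.mp (h ▸ hab.le))
    have hbne : b ≠ ⊥ := fun h => ha (le_bot_iff.mp (h ▸ hab.le))
    have hca : c a = d := by
      have hmem := hcl a (by simp)
      simp only [Set.mem_insert_iff, Set.mem_singleton_iff] at hmem
      rcases hmem with h | h | h | h | h
      · have := hc1 a; rw [h, sup_bot_eq] at this; exact absurd this hane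
      · have := hc1 a; rw [h, sup_idem] at this; exact absurd this hane
      · have := hc2 a; rw [h, inf_eq_left.mpr hab.le] at this; exact absurd this ha
      · exact h
      · have := hc2 a; rw [h, inf_top_eq] at this; exact absurd this ha
    have hcb : c b = d := by
      have hmem := hcl b (by simp)
      simp only [Set.mem_insert_iff, Set.mem_singleton_iff] at hmem
      rcases hmem with h | h | h | h | h
      · have := hc1 b; rw [h, sup_bot_eq] at this; exact absurd this hb
      · have := hc1 b; rw [h, sup_eq_left.mpr hab.le] at this; exact absurd this hb
      · have := hc1 b; rw [h, sup_idem] at this; exact absurd this hb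
      · exact h
      · have := hc2 b; rw [h, inf_top_eq] at this; exact absurd this hbne
    exact absurd (hq a b hab.le (hca.trans hcb.symm)) hab.ne
end

section
/- Let K be a complemented bounded lattice, B a Boolean lattice, and S a map assigning to each x ∈ B a complementation S_x on K. Define C_S(a, x) := (S_x(a), x') on the direct product lattice K × B. Then C_S is a complementation on K × B, and if each S_x is injective then C_S is injective. Conversely, every complementation on K × B arises in this way from a unique such map S. -/
theorem stmt_6 {K B : Type*} [Lattice K] [BoundedOrder K] [BooleanAlgebra B] :
    (∀ S : B → K → K,
      (∀ x : B, ∀ a : K, a ⊔ S x a = ⊤ ∧ a ⊓ S x a = ⊥) →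
      ((∀ p : K × B, p ⊔ (S p.2 p.1, p.2ᶜ) = ⊤ ∧ p ⊓ (S p.2 p.1, p.2ᶜ) = ⊥) ∧
       ((∀ x : B, Function.Injective (S x)) →
         Function.Injective (fun p : K × B => ((S p.2 p.1, p.2ᶜ) : K × B))))) ∧
    (∀ C : K × B → K × B,
      (∀ p : K × B, p ⊔ C p = ⊤ ∧ p ⊓ C p = ⊥) →
      ∃! S : B → K → K,
        (∀ x : B, ∀ a : K, a ⊔ S x a = ⊤ ∧ a ⊓ S x a = ⊥) ∧
        (∀ p : K × B, C p = (S p.2 p.1, p.2ᶜ))) := by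
  constructor
  · intro S hS
    constructor
    · intro p
      obtain ⟨h1, h2⟩ := hS p.2 p.1
      constructor
      · exact Prod.ext h1 (sup_compl_eq_top)
      · exact Prod.ext h2 (inf_compl_eq_bot)
    · intro hinj p q hpq
      simp only [Prod.mk.injEq] at hpq
      have h2 : p.2 = q.2 := compl_injective hpq.2
      have h1 : p.1 = q.1 := hinj p.2 (by rw [hpq.1, h2])
      exact Prod.ext h1 h2
  · intro C hC
    refine ⟨fun x a => (C (a, x)).1, ⟨?_, ?_⟩, ?_⟩
    · intro x a
      obtain ⟨h1, h2⟩ := hC (a, x)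
      rw [Prod.ext_iff] at h1 h2
      exact ⟨h1.1, h2.1⟩
    · intro p
      obtain ⟨h1, h2⟩ := hC p
      rw [Prod.ext_iff] at h1 h2
      have hcompl : IsCompl p.2 (C p).2 :=
        ⟨disjoint_iff.mpr h2.2, codisjoint_iff.mpr h1.2⟩
      exact Prod.ext rfl hcompl.compl_eq.symm
    · intro S' ⟨_, hS'⟩
      funext x a
      have := hS' (a, x)
      rw [Prod.ext_iff] at this
      exact this.1.symm
end

section
/- Every weakly orthomodular lattice with complementation satisfying De Morgan's laws has injective complementation; likewise every dually weakly orthomodular lattice with complementation satisfying De Morgan's laws has injective complementation. -/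
theorem stmt_7 {L : Type*} [Lattice L] [BoundedOrder L] (c : L → L)
    (hc1 : ∀ a : L, a ⊔ c a = ⊤) (hc2 : ∀ a : L, a ⊓ c a = ⊥)
    (hdm1 : ∀ x y : L, c (x ⊔ y) = c x ⊓ c y)
    (hdm2 : ∀ x y : L, c (x ⊓ y) = c x ⊔ c y) :
    ((∀ x y : L, x ≤ y → x ⊔ (c x ⊓ y) = y) → Function.Injective c) ∧
    ((∀ x y : L, y ≤ x → x ⊓ (c x ⊔ y) = y) → Function.Injective c) := by
  constructor
  · intro h a b hab
    have ha := h (a ⊓ b) a inf_le_left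
    have hb := h (a ⊓ b) b inf_le_right
    rw [hdm2, hab] at ha hb
    rw [sup_idem] at ha hb
    rw [← hab, inf_comm (c a) a, hc2] at ha
    rw [inf_comm (c b) b, hc2] at hb
    rw [sup_bot_eq] at ha hb
    exact ha.symm.trans hb
  · intro h a b hab
    have ha := h (a ⊔ b) a le_sup_left
    have hb := h (a ⊔ b) b le_sup_right
    rw [hdm1, hab] at ha hb
    rw [inf_idem] at ha hb
    rw [← hab, sup_comm (c a) a, hc1] at ha
    rw [sup_comm (c b) b, hc1] at hb
    rw [inf_top_eq] at ha hb
    exact ha.symm.trans hb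
end

section
/- Every lattice with complementation satisfying De Morgan's laws and the quasi-identity (x' ∧ y = 0 and x ∧ y' = 0 imply x = y) is both weakly orthomodular and dually weakly orthomodular. Moreover, every modular lattice with complementation is both weakly orthomodular and dually weakly orthomodular. -/
theorem stmt_9 {L : Type*} [Lattice L] [BoundedOrder L] (c : L → L)
    (hc1 : ∀ a : L, a ⊔ c a = ⊤) (hc2 : ∀ a : L, a ⊓ c a = ⊥) :
    (((∀ x y : L, c (x ⊔ y) = c x ⊓ c y) ∧
      (∀ x y : L, c (x ⊓ y) = c x ⊔ c y) ∧
      (∀ x y : L, c x ⊓ y = ⊥ → x ⊓ c y = ⊥ → x = y)) →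
      ((∀ x y : L, x ≤ y → x ⊔ (c x ⊓ y) = y) ∧
       (∀ x y : L, y ≤ x → x ⊓ (c x ⊔ y) = y))) ∧
    ((∀ x y z : L, x ≤ z → (x ⊔ y) ⊓ z = x ⊔ (y ⊓ z)) →
      ((∀ x y : L, x ≤ y → x ⊔ (c x ⊓ y) = y) ∧
       (∀ x y : L, y ≤ x → x ⊓ (c x ⊔ y) = y))) := by
  constructor
  · rintro ⟨dm1, dm2, q⟩
    have wom : ∀ x y : L, x ≤ y → x ⊔ (c x ⊓ y) = y := by
      intro x y hxy
      apply q
      · rw [dm1]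
        have h : c x ⊓ c (c x ⊓ y) ⊓ y = (c x ⊓ y) ⊓ c (c x ⊓ y) := by
          rw [inf_assoc, inf_comm (c (c x ⊓ y)) y, ← inf_assoc]
        rw [h, hc2]
      · have h1 : x ⊔ (c x ⊓ y) ≤ y := sup_le hxy inf_le_right
        have h2 : (x ⊔ (c x ⊓ y)) ⊓ c y ≤ y ⊓ c y := inf_le_inf_right _ h1
        rw [hc2] at h2
        exact le_bot_iff.mp h2
    refine ⟨wom, ?_⟩
    intro x y hyx
    have hanti : c x ≤ c y := by
      have hx : y ⊔ x = x := sup_eq_right.mpr hyx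
      have : c x = c y ⊓ c x := by rw [← dm1, hx]
      rw [this]; exact inf_le_left
    have hw' : c (x ⊓ (c x ⊔ y)) = c y := by
      rw [dm2, dm1]
      exact wom (c x) (c y) hanti
    apply q
    · rw [hw', inf_comm, hc2]
    · rw [← hw', hc2]
  · intro hmod
    constructor
    · intro x y hxy
      have h := hmod x (c x) y hxy
      rw [hc1] at h
      rw [← h, top_inf_eq]
    · intro x y hyx
      have h := hmod y (c x) x hyx
      rw [inf_comm (c x) x, hc2, sup_bot_eq] at h
      rw [inf_comm, sup_comm (c x) y, h]
end

section
/- Let L be a lattice with complementation satisfying De Morgan's laws and let e ∈ L be a neutral element. Then the map η(x) := (x ∧ e, x ∨ e) is an isomorphism of lattices with complementation from L onto the product of ([0,e], ∨, ∧, ♭, 0, e) and ([e,1], ∨, ∧, ♯, e, 1), where x^♭ := x' ∧ e and x^♯ := x' ∨ e. -/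
theorem stmt_12 {L : Type*} [Lattice L] [BoundedOrder L] (c : L → L)
    (hc1 : ∀ a : L, a ⊔ c a = ⊤) (hc2 : ∀ a : L, a ⊓ c a = ⊥)
    (hdm1 : ∀ x y : L, c (x ⊔ y) = c x ⊓ c y)
    (hdm2 : ∀ x y : L, c (x ⊓ y) = c x ⊔ c y)
    (e : L)
    (hneut : ∀ x y : L,
      (e ⊔ x) ⊓ (e ⊔ y) ⊓ (x ⊔ y) = (e ⊓ x) ⊔ (e ⊓ y) ⊔ (x ⊓ y)) :
    -- η(x) = (x ⊓ e, x ⊔ e) is a bijection of L onto [0,e] × [e,1],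
    -- preserving ⊔, ⊓, bounds, and the complementations ♭ and ♯.
    Set.BijOn (fun x : L => ((x ⊓ e, x ⊔ e) : L × L)) Set.univ
      {p : L × L | p.1 ≤ e ∧ e ≤ p.2} ∧
    (∀ x y : L, (x ⊔ y) ⊓ e = (x ⊓ e) ⊔ (y ⊓ e) ∧ (x ⊔ y) ⊔ e = (x ⊔ e) ⊔ (y ⊔ e)) ∧
    (∀ x y : L, (x ⊓ y) ⊓ e = (x ⊓ e) ⊓ (y ⊓ e) ∧ (x ⊓ y) ⊔ e = (x ⊔ e) ⊓ (y ⊔ e)) ∧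
    ((⊥ : L) ⊓ e = ⊥ ∧ (⊥ : L) ⊔ e = e ∧ (⊤ : L) ⊓ e = e ∧ (⊤ : L) ⊔ e = ⊤) ∧
    (∀ x : L, c x ⊓ e = c (x ⊓ e) ⊓ e ∧ c x ⊔ e = c (x ⊔ e) ⊔ e) := by
  -- modular law at e (below)
  have lem1 : ∀ a y : L, a ≤ e → e ⊓ (a ⊔ y) = a ⊔ (e ⊓ y) := by
    intro a y ha
    have h := hneut a y
    rw [sup_eq_left.mpr ha, inf_eq_right.mpr ha] at h
    calc e ⊓ (a ⊔ y) = e ⊓ (e ⊔ y) ⊓ (a ⊔ y) := by rw [inf_sup_self]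
      _ = a ⊔ (e ⊓ y) ⊔ (a ⊓ y) := h
      _ = a ⊔ (e ⊓ y) := sup_eq_left.mpr (le_sup_of_le_left inf_le_left)
  -- modular law at e (above)
  have lem2 : ∀ b y : L, e ≤ b → e ⊔ (b ⊓ y) = b ⊓ (e ⊔ y) := by
    intro b y hb
    have h := hneut b y
    rw [sup_eq_right.mpr hb, inf_eq_left.mpr hb] at h
    calc e ⊔ (b ⊓ y) = e ⊔ (e ⊓ y) ⊔ (b ⊓ y) := by rw [sup_inf_self]
      _ = b ⊓ (e ⊔ y) ⊓ (b ⊔ y) := h.symm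
      _ = b ⊓ (e ⊔ y) := inf_eq_left.mpr (inf_le_of_left_le le_sup_left)
  -- e is distributive
  have dist1 : ∀ x y : L, e ⊓ (x ⊔ y) = (e ⊓ x) ⊔ (e ⊓ y) := by
    intro x y
    have h := hneut x y
    have h2 : e ⊓ (x ⊔ y) = e ⊓ ((e ⊔ x) ⊓ (e ⊔ y) ⊓ (x ⊔ y)) :=
      le_antisymm
        (le_inf inf_le_left (le_inf (le_inf (inf_le_of_left_le le_sup_left)
          (inf_le_of_left_le le_sup_left)) inf_le_right))
        (inf_le_inf_left e inf_le_right)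
    rw [h] at h2
    rw [h2, lem1 ((e ⊓ x) ⊔ (e ⊓ y)) (x ⊓ y) (sup_le inf_le_left inf_le_left),
      sup_eq_left.mpr (le_sup_of_le_left (inf_le_inf_left e inf_le_left))]
  -- e is dually distributive
  have dist2 : ∀ x y : L, e ⊔ (x ⊓ y) = (e ⊔ x) ⊓ (e ⊔ y) := by
    intro x y
    have h := hneut x y
    have h2 : e ⊔ (x ⊓ y) = e ⊔ ((e ⊓ x) ⊔ (e ⊓ y) ⊔ (x ⊓ y)) :=
      le_antisymm
        (sup_le_sup_left le_sup_right e)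
        (sup_le le_sup_left (sup_le (sup_le (le_sup_of_le_left inf_le_left)
          (le_sup_of_le_left inf_le_left)) le_sup_right))
    rw [← h] at h2
    rw [h2, lem2 ((e ⊔ x) ⊓ (e ⊔ y)) (x ⊔ y) (le_inf le_sup_left le_sup_left),
      inf_eq_left.mpr (inf_le_of_left_le (sup_le_sup_left le_sup_left e))]
  refine ⟨⟨?_, ?_, ?_⟩, ?_, ?_, ?_, ?_⟩
  · intro x _
    exact ⟨inf_le_right, le_sup_right⟩
  · -- injectivity
    intro x _ y _ hxy
    simp only [Prod.mk.injEq] at hxy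
    obtain ⟨h1, h2⟩ := hxy
    have key : ∀ u v : L, u ⊓ e = v ⊓ e → u ⊔ e = v ⊔ e → u ≤ v := by
      intro u v k1 k2
      have h := hneut u v
      rw [sup_comm e u, sup_comm e v, inf_comm e u, inf_comm e v, k1, k2] at h
      have hu : u ≤ (v ⊔ e) ⊓ (v ⊔ e) ⊓ (u ⊔ v) :=
        le_inf (le_inf (by rw [← k2]; exact le_sup_left) (by rw [← k2]; exact le_sup_left))
          le_sup_left
      exact (hu.trans h.le).trans (sup_le (sup_le inf_le_left inf_le_left) inf_le_right)
    exact le_antisymm (key x y h1 h2) (key y x h1.symm h2.symm)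
  · -- surjectivity
    intro p hp
    obtain ⟨ha, hb⟩ := hp
    refine ⟨p.1 ⊔ (p.2 ⊓ c e), trivial, ?_⟩
    have h1 : (p.1 ⊔ p.2 ⊓ c e) ⊓ e = p.1 := by
      rw [inf_comm, dist1, inf_eq_right.mpr ha, ← inf_assoc, inf_comm e p.2,
        inf_assoc, hc2, inf_bot_eq, sup_bot_eq]
    have h2 : (p.1 ⊔ p.2 ⊓ c e) ⊔ e = p.2 := by
      rw [sup_right_comm, sup_eq_right.mpr ha, dist2, sup_eq_right.mpr hb, hc1, inf_top_eq]
    simp [h1, h2]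
  · intro x y
    refine ⟨?_, ?_⟩
    · rw [inf_comm (x ⊔ y) e, dist1, inf_comm e x, inf_comm e y]
    · rw [sup_sup_sup_comm, sup_idem]
  · intro x y
    refine ⟨?_, ?_⟩
    · rw [inf_inf_inf_comm, inf_idem]
    · rw [sup_comm (x ⊓ y) e, dist2, sup_comm e x, sup_comm e y]
  · simp
  · intro x
    refine ⟨?_, ?_⟩
    · rw [hdm2, inf_comm (c x) e, inf_comm (c x ⊔ c e) e, dist1, hc2, sup_bot_eq]
    · rw [hdm1, sup_comm (c x) e, sup_comm (c x ⊓ c e) e, dist2, hc1, inf_top_eq]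
end

section
/- Let L be a lattice with complementation satisfying the quasi-identity (x' ∧ y = 0 and x ∧ y' = 0 imply x = y), and let e ∈ L be neutral. Then the intervals [0, e] with complementation x ↦ x' ∧ e and [e, 1] with complementation x ↦ x' ∨ e again satisfy this quasi-identity. -/
theorem stmt_13 {L : Type*} [Lattice L] [BoundedOrder L] (c : L → L)
    (hc1 : ∀ a : L, a ⊔ c a = ⊤) (hc2 : ∀ a : L, a ⊓ c a = ⊥)
    (hW : ∀ x y : L, c x ⊓ y = ⊥ → x ⊓ c y = ⊥ → x = y)
    (e : L)
    (hneut : ∀ x y : L,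
      (e ⊔ x) ⊓ (e ⊔ y) ⊓ (x ⊔ y) = (e ⊓ x) ⊔ (e ⊓ y) ⊔ (x ⊓ y)) :
    (∀ x y : L, x ≤ e → y ≤ e →
      (c x ⊓ e) ⊓ y = ⊥ → x ⊓ (c y ⊓ e) = ⊥ → x = y) ∧
    (∀ x y : L, e ≤ x → e ≤ y →
      (c x ⊔ e) ⊓ y = e → x ⊓ (c y ⊔ e) = e → x = y) := by
  constructor
  · intro x y hx hy h1 h2
    apply hW
    · have : c x ⊓ y ≤ (c x ⊓ e) ⊓ y :=
        le_inf (le_inf inf_le_left (inf_le_right.trans hy)) inf_le_right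
      exact le_bot_iff.mp (h1 ▸ this)
    · have : x ⊓ c y ≤ x ⊓ (c y ⊓ e) :=
        le_inf inf_le_left (le_inf inf_le_right (inf_le_left.trans hx))
      exact le_bot_iff.mp (h2 ▸ this)
  · intro x y hx hy h1 h2
    apply hW
    · have h3 : c x ⊓ y ≤ e := h1 ▸ inf_le_inf_right y le_sup_left
      have : c x ⊓ y ≤ x ⊓ c x := le_inf (h3.trans hx) inf_le_left
      exact le_bot_iff.mp (this.trans (hc2 x).le)
    · have h3 : x ⊓ c y ≤ e := h2 ▸ inf_le_inf_left x le_sup_left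
      have : x ⊓ c y ≤ y ⊓ c y := le_inf (h3.trans hy) inf_le_right
      exact le_bot_iff.mp (this.trans (hc2 y).le)
end

section
/- Let L be a lattice with complementation satisfying De Morgan's laws that is weakly orthomodular (or dually weakly orthomodular). If an element a ∈ L has a unique complement, then a'' = a. -/
theorem stmt_14 {L : Type*} [Lattice L] [BoundedOrder L] (c : L → L)
    (hc1 : ∀ a : L, a ⊔ c a = ⊤) (hc2 : ∀ a : L, a ⊓ c a = ⊥)
    (hdm1 : ∀ x y : L, c (x ⊔ y) = c x ⊓ c y)
    (hdm2 : ∀ x y : L, c (x ⊓ y) = c x ⊔ c y)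
    (hom : (∀ x y : L, x ≤ y → x ⊔ (c x ⊓ y) = y) ∨
           (∀ x y : L, y ≤ x → x ⊓ (c x ⊔ y) = y))
    (a : L)
    (huniq : ∀ b : L, a ⊔ b = ⊤ → a ⊓ b = ⊥ → b = c a) :
    c (c a) = a := by
  rcases hom with hom1 | hdom
  · -- weakly orthomodular case
    -- t₁ = a ⊓ c (c a), s₁ = a ⊔ c (c a), X₁ = c t₁ ⊓ (c (c a) ⊔ c s₁)
    set X := c (a ⊓ c (c a)) ⊓ (c (c a) ⊔ c (a ⊔ c (c a))) with hX
    have hct : c (a ⊓ c (c a)) = c a ⊔ c (c (c a)) := hdm2 a (c (c a))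
    have hcs : c (a ⊔ c (c a)) = c a ⊓ c (c (c a)) := hdm1 a (c (c a))
    have htX : (a ⊓ c (c a)) ⊔ X = c (c a) ⊔ c (a ⊔ c (c a)) := by
      rw [hX]
      exact hom1 _ _ (le_trans inf_le_right le_sup_left)
    have hjoin : a ⊔ X = ⊤ := by
      have hxa : a ⊔ (a ⊓ c (c a)) = a := sup_eq_left.mpr inf_le_left
      have h1 : a ⊔ X = a ⊔ ((a ⊓ c (c a)) ⊔ X) := by
        rw [← sup_assoc, hxa]
      rw [h1, htX, ← sup_assoc]
      exact hc1 (a ⊔ c (c a))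
    have hkey : c (a ⊔ c (c a)) ⊔ (c (c (a ⊔ c (c a))) ⊓ c (c (c a))) = c (c (c a)) :=
      hom1 _ _ (by rw [hcs]; exact inf_le_right)
    have hcX : c X = c (c (a ⊓ c (c a))) ⊔ (c (c (c a)) ⊓ c (c (a ⊔ c (c a)))) := by
      rw [hX, hdm2, hdm1]
    have e1 : c a ≤ c a ⊔ c X := le_sup_left
    have e2 : c (c (a ⊓ c (c a))) ≤ c a ⊔ c X := by
      rw [hcX]
      exact le_trans le_sup_left le_sup_right
    have e3 : c (c (c a)) ≤ c a ⊔ c X := by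
      rw [hcX]
      calc c (c (c a)) = c (a ⊔ c (c a)) ⊔ (c (c (a ⊔ c (c a))) ⊓ c (c (c a))) := hkey.symm
        _ ≤ c a ⊔ (c (c (c a)) ⊓ c (c (a ⊔ c (c a)))) := by
            apply sup_le_sup
            · rw [hcs]; exact inf_le_left
            · exact le_of_eq (inf_comm _ _)
        _ ≤ c a ⊔ (c (c (a ⊓ c (c a))) ⊔ (c (c (c a)) ⊓ c (c (a ⊔ c (c a))))) :=
            sup_le_sup_left le_sup_right _
    have hb : c (a ⊓ c (c a)) ⊔ c (c (a ⊓ c (c a))) ≤ c a ⊔ c X := by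
      apply sup_le _ e2
      rw [hct]
      exact sup_le e1 e3
    have htop : c a ⊔ c X = ⊤ := top_unique ((hc1 (c (a ⊓ c (c a)))) ▸ hb)
    have hmeet : a ⊓ X = ⊥ := by
      have h := hc2 (a ⊓ X)
      rw [hdm2, htop, inf_top_eq] at h
      exact h
    have hXa : X = c a := huniq X hjoin hmeet
    have hfull : c (c a) ⊔ c (a ⊔ c (c a)) = ⊤ := by
      have lx : X ≤ c (c a) ⊔ c (a ⊔ c (c a)) := by rw [hX]; exact inf_le_right
      have l1 : c a ≤ c (c a) ⊔ c (a ⊔ c (c a)) := hXa ▸ lx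
      have l2 : c a ⊔ c (c a) ≤ c (c a) ⊔ c (a ⊔ c (c a)) := sup_le l1 le_sup_left
      exact top_unique ((hc1 (c a)) ▸ l2)
    have ha1t : c a = c (a ⊓ c (c a)) := by
      have h : X = c (a ⊓ c (c a)) := by rw [hX, hfull, inf_top_eq]
      exact hXa.symm.trans h
    have hta : a ⊓ c (c a) = a := by
      have hd := hom1 (a ⊓ c (c a)) a inf_le_left
      rw [← ha1t, inf_comm (c a) a, hc2 a, sup_bot_eq] at hd
      exact hd
    have ha2a : a ≤ c (c a) := le_trans (le_of_eq hta.symm) inf_le_right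
    have hfin := hom1 a (c (c a)) ha2a
    rw [hc2 (c a), sup_bot_eq] at hfin
    exact hfin.symm
  · -- dually weakly orthomodular case
    -- t = a ⊔ c (c a), s = a ⊓ c (c a), X = c t ⊔ (c (c a) ⊓ c s)
    set X := c (a ⊔ c (c a)) ⊔ (c (c a) ⊓ c (a ⊓ c (c a))) with hX
    have hct : c (a ⊔ c (c a)) = c a ⊓ c (c (c a)) := hdm1 a (c (c a))
    have hcs : c (a ⊓ c (c a)) = c a ⊔ c (c (c a)) := hdm2 a (c (c a))
    have htX : (a ⊔ c (c a)) ⊓ X = c (c a) ⊓ c (a ⊓ c (c a)) := by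
      rw [hX]
      exact hdom _ _ (le_trans inf_le_left le_sup_right)
    have hmeet : a ⊓ X = ⊥ := by
      have hxa : a ⊓ (a ⊔ c (c a)) = a := inf_eq_left.mpr le_sup_left
      have h1 : a ⊓ X = a ⊓ ((a ⊔ c (c a)) ⊓ X) := by
        rw [← inf_assoc, hxa]
      rw [h1, htX, ← inf_assoc]
      exact hc2 (a ⊓ c (c a))
    have hkey : c (a ⊓ c (c a)) ⊓ (c (c (a ⊓ c (c a))) ⊔ c (c (c a))) = c (c (c a)) :=
      hdom _ _ (by rw [hcs]; exact le_sup_right)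
    have hcX : c X = c (c (a ⊔ c (c a))) ⊓ (c (c (c a)) ⊔ c (c (a ⊓ c (c a)))) := by
      rw [hX, hdm1, hdm2]
    have e1 : c a ⊓ c X ≤ c a := inf_le_left
    have e2 : c a ⊓ c X ≤ c (c (a ⊔ c (c a))) := by
      rw [hcX]
      exact le_trans inf_le_right inf_le_left
    have e3 : c a ⊓ c X ≤ c (c (c a)) := by
      rw [hcX]
      calc c a ⊓ (c (c (a ⊔ c (c a))) ⊓ (c (c (c a)) ⊔ c (c (a ⊓ c (c a)))))
          ≤ c a ⊓ (c (c (c a)) ⊔ c (c (a ⊓ c (c a)))) := inf_le_inf_left _ inf_le_right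
        _ ≤ c (a ⊓ c (c a)) ⊓ (c (c (a ⊓ c (c a))) ⊔ c (c (c a))) := by
            apply inf_le_inf
            · rw [hcs]; exact le_sup_left
            · exact le_of_eq (sup_comm _ _)
        _ = c (c (c a)) := hkey
    have hb : c a ⊓ c X ≤ c (a ⊔ c (c a)) ⊓ c (c (a ⊔ c (c a))) := by
      apply le_inf _ e2
      rw [hct]
      exact le_inf e1 e3
    have hbot : c a ⊓ c X = ⊥ := le_bot_iff.mp ((hc2 (c (a ⊔ c (c a)))) ▸ hb)
    have hjoin : a ⊔ X = ⊤ := by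
      have h := hc1 (a ⊔ X)
      rw [hdm1, hbot, sup_bot_eq] at h
      exact h
    have hXa : X = c a := huniq X hjoin hmeet
    have hzero : c (c a) ⊓ c (a ⊓ c (c a)) = ⊥ := by
      have lx : c (c a) ⊓ c (a ⊓ c (c a)) ≤ X := by rw [hX]; exact le_sup_right
      have l1 : c (c a) ⊓ c (a ⊓ c (c a)) ≤ c a := hXa ▸ lx
      have l2 : c (c a) ⊓ c (a ⊓ c (c a)) ≤ c a ⊓ c (c a) := le_inf l1 inf_le_left
      exact le_bot_iff.mp ((hc2 (c a)) ▸ l2)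
    have ha1t : c a = c (a ⊔ c (c a)) := by
      have h : X = c (a ⊔ c (c a)) := by rw [hX, hzero, sup_bot_eq]
      exact hXa.symm.trans h
    have hta : a ⊔ c (c a) = a := by
      have hd := hdom (a ⊔ c (c a)) a le_sup_left
      rw [← ha1t, sup_comm (c a) a, hc1 a, inf_top_eq] at hd
      exact hd
    have ha2a : c (c a) ≤ a := le_trans le_sup_right (le_of_eq hta)
    have hfin := hdom a (c (c a)) ha2a
    rw [hc1 (c a), inf_top_eq] at hfin
    exact hfin.symm
end

section
/- If L is a lattice with complementation that is both weakly orthomodular and dually weakly orthomodular and satisfies De Morgan's laws, then every lattice congruence on L preserves the complementation; i.e., the congruences of L coincide with the congruences of its lattice reduct. -/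
theorem stmt_17 {L : Type*} [Lattice L] [BoundedOrder L] (c : L → L)
    (hc1 : ∀ a : L, a ⊔ c a = ⊤) (hc2 : ∀ a : L, a ⊓ c a = ⊥)
    (hwom : ∀ x y : L, x ≤ y → x ⊔ (c x ⊓ y) = y)
    (hdwom : ∀ x y : L, y ≤ x → x ⊓ (c x ⊔ y) = y)
    (hdm1 : ∀ x y : L, c (x ⊔ y) = c x ⊓ c y)
    (hdm2 : ∀ x y : L, c (x ⊓ y) = c x ⊔ c y)
    (θ : L → L → Prop) (hequiv : Equivalence θ)
    (hsup : ∀ a b a' b' : L, θ a b → θ a' b' → θ (a ⊔ a') (b ⊔ b'))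
    (hinf : ∀ a b a' b' : L, θ a b → θ a' b' → θ (a ⊓ a') (b ⊓ b')) :
    ∀ a b : L, θ a b → θ (c a) (c b) := by
  have key : ∀ x y : L, x ≤ y → θ x y → θ (c x) (c y) := by
    intro x y hxy hθ
    -- w := c x ⊓ y is congruent to ⊥
    have hw : θ ⊥ (c x ⊓ y) := by
      have h := hinf (c x) (c x) x y (hequiv.refl _) hθ
      rwa [inf_comm (c x) x, hc2 x] at h
    -- hence c w is congruent to ⊤
    have hw' : θ (c (c x ⊓ y)) ⊤ := by
      have h := hsup (c (c x ⊓ y)) (c (c x ⊓ y)) ⊥ (c x ⊓ y) (hequiv.refl _) hw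
      rwa [sup_bot_eq, sup_comm (c (c x ⊓ y)) (c x ⊓ y), hc1 (c x ⊓ y)] at h
    -- meet with c x : c x ⊓ c w = c (x ⊔ w) = c y
    have h := hinf (c x) (c x) (c (c x ⊓ y)) ⊤ (hequiv.refl _) hw'
    rw [← hdm1, hwom x y hxy, inf_top_eq] at h
    exact hequiv.symm h
  intro a b hab
  have h1 : θ (a ⊓ b) a := by
    have h := hinf a b a a hab (hequiv.refl a)
    rw [inf_comm b a] at h
    exact hequiv.symm (by rwa [inf_idem] at h)
  have h2 : θ (a ⊓ b) b := by
    have h := hinf a b b b hab (hequiv.refl b)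
    rwa [inf_idem] at h
  exact hequiv.trans (hequiv.symm (key (a ⊓ b) a inf_le_left h1))
    (key (a ⊓ b) b inf_le_right h2)
end

section
/- For a lattice with complementation L, the ternary term p(x,y,z) := (x ∧ y ∧ z) ∨ (x ∧ (x ∧ y)') ∨ (z ∧ (z ∧ y)') satisfies the Pixley identities p(x,y,y) = p(x,y,x) = p(y,y,x) = x for all elements if and only if L is weakly orthomodular. -/
theorem stmt_18 {L : Type*} [Lattice L] [BoundedOrder L] (c : L → L)
    (hc1 : ∀ a : L, a ⊔ c a = ⊤) (hc2 : ∀ a : L, a ⊓ c a = ⊥) :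
    (∀ x y : L,
      ((x ⊓ y ⊓ y) ⊔ (x ⊓ c (x ⊓ y)) ⊔ (y ⊓ c (y ⊓ y)) = x) ∧
      ((x ⊓ y ⊓ x) ⊔ (x ⊓ c (x ⊓ y)) ⊔ (x ⊓ c (x ⊓ y)) = x) ∧
      ((y ⊓ y ⊓ x) ⊔ (y ⊓ c (y ⊓ y)) ⊔ (x ⊓ c (x ⊓ y)) = x)) ↔
    (∀ x y : L, x ≤ y → x ⊔ (c x ⊓ y) = y) := by
  constructor
  · intro h x y hxy
    have h1 := (h y x).1
    have hyx : y ⊓ x = x := inf_eq_right.mpr hxy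
    rw [hyx, inf_idem, hc2, sup_bot_eq, inf_comm] at h1
    exact h1
  · intro h x y
    have key : (x ⊓ y) ⊔ (x ⊓ c (x ⊓ y)) = x := by
      have := h (x ⊓ y) x inf_le_left
      rwa [inf_comm (c (x ⊓ y)) x] at this
    refine ⟨?_, ?_, ?_⟩
    · rw [inf_assoc, inf_idem, hc2, sup_bot_eq, key]
    · rw [inf_right_comm, inf_idem, sup_assoc, sup_idem, key]
    · rw [inf_idem, hc2, sup_bot_eq, inf_comm y x, key]
end

section
/- Every weakly orthomodular lattice with complementation satisfies: (a ∨ b) ∧ (a ∧ b)' = 0 if and only if a = b. Consequently, the binary term x ⊕ y := (x ∨ y) ∧ (x ∧ y)' witnesses congruence regularity via the terms t₁(x,y,z) = (x ⊕ y) ∨ z and t₂(x,y,z) = (x ⊕ y)' ∧ z, i.e., (t₁(a,b,c) = c and t₂(a,b,c) = c) if and only if a = b. -/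
theorem stmt_19 {L : Type*} [Lattice L] [BoundedOrder L] (c : L → L)
    (hc1 : ∀ a : L, a ⊔ c a = ⊤) (hc2 : ∀ a : L, a ⊓ c a = ⊥)
    (hwom : ∀ x y : L, x ≤ y → x ⊔ (c x ⊓ y) = y) :
    (∀ a b : L, (a ⊔ b) ⊓ c (a ⊓ b) = ⊥ ↔ a = b) ∧
    (∀ a b z : L,
      ((((a ⊔ b) ⊓ c (a ⊓ b)) ⊔ z = z ∧ c ((a ⊔ b) ⊓ c (a ⊓ b)) ⊓ z = z) ↔ a = b)) := by
  have key : ∀ a b : L, (a ⊔ b) ⊓ c (a ⊓ b) = ⊥ ↔ a = b := by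
    intro a b
    constructor
    · intro h
      have h1 := hwom (a ⊓ b) (a ⊔ b) (le_trans inf_le_left le_sup_left)
      rw [inf_comm] at h
      rw [h, sup_bot_eq] at h1
      have ha : a ≤ a ⊓ b := h1 ▸ le_sup_left
      have hb : b ≤ a ⊓ b := h1 ▸ le_sup_right
      exact le_antisymm (le_trans ha inf_le_right) (le_trans hb inf_le_left)
    · rintro rfl
      simpa using hc2 a
  refine ⟨key, fun a b z => ?_⟩
  constructor
  · rintro ⟨h1, h2⟩
    set e := (a ⊔ b) ⊓ c (a ⊓ b) with he
    have hez : e ≤ z := sup_eq_right.mp h1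
    have hzce : z ≤ c e := h2 ▸ inf_le_left
    have : e = ⊥ := by
      have := hc2 e
      have : e ⊓ c e = e := inf_eq_left.mpr (le_trans hez hzce)
      rw [hc2 e] at this
      exact this.symm
    exact (key a b).mp this
  · rintro rfl
    have he : (a ⊔ a) ⊓ c (a ⊓ a) = ⊥ := (key a a).mpr rfl
    have hcb : c (⊥ : L) = ⊤ := by have := hc1 (⊥ : L); simpa using this
    rw [he, hcb]
    simp
end
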